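/- Let Y be a standard planar Brownian motion started at the origin, and for a ≥ 1 let κ_a := inf{ t > 0 : ω(Y(t)) = a } be the first hitting time of the boundary of the wedge N_a (which is almost surely finite). Then there exists an absolute constant C > 0 such that for all a ≥ 1 and all r > 0, P(κ_a ≥ r) ≤ C a^{3/2} / √r. -/

import Mathlib

/-!
The wedge `N_a` lies in the half-plane `{w | -(√6 / 3) a ≤ w.1}` bounded by its apex, so before
`κ_a` the first coordinate `W₁` stays above `-c` with `c = (√6 / 3) a ≤ a ^ (3/2)`; it suffices
that a one-dimensional Brownian motion stays above `-c` up to time `r` with probability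
`O(c / √r)`.

Sampled at the times `k c²`, the negated increments of `W₁` form a symmetric Gaussian random walk
that has to stay below `c` for `n ≈ r / c²` steps. Prepending a first step below `-c`
(probability at least `1/10`) turns this into a walk staying negative for `n + 1` steps. For any
symmetric i.i.d. walk the probability `p_n` of staying negative for `n` steps satisfies
`(n + 1) p_n² ≤ 1`: the events "the partial sums `S_0, …, S_n` have their strict maximum at `j`"
are disjoint, and each is the intersection of two independent events, the time-reversed walk
staying negative for `j` steps and the shifted walk staying negative for `n - j` steps, each of
probability at least `p_n`.
-/

open MeasureTheory ProbabilityTheory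

noncomputable section

/-- A standard Brownian motion (indexed by `ℝ`, relevant on `[0, ∞)`) on a
probability space `(Ω, P)`: continuous paths started at `0`, with Gaussian
increments that are independent over disjoint time intervals. -/
structure IsStandardBM {Ω : Type*} [MeasurableSpace Ω] (P : Measure Ω)
    (W : ℝ → Ω → ℝ) : Prop where
  start : ∀ ω, W 0 ω = 0
  cont : ∀ ω, Continuous fun t => W t ω
  meas : ∀ t, Measurable (W t)
  gauss : ∀ s t : ℝ, 0 ≤ s → s ≤ t →
    P.map (fun ω => W t ω - W s ω) = gaussianReal 0 (Real.toNNReal (t - s))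
  indep : ∀ (n : ℕ) (t : ℕ → ℝ), Monotone t → 0 ≤ t 0 →
    iIndepFun
      (fun i : Fin n => fun ω => W (t (i + 1)) ω - W (t i) ω) P

variable {Ω : Type*} [MeasurableSpace Ω]

/-- Dot product on `ℝ²`. -/
def dot2 (a b : ℝ × ℝ) : ℝ := a.1 * b.1 + a.2 * b.2

/-- `v₁ = −(√2/2)(√3, −1)`. -/
def vK1 : ℝ × ℝ := (-(Real.sqrt 2 / 2) * Real.sqrt 3, Real.sqrt 2 / 2)

/-- `v₂ = −(√2/2)(√3, 1)`. -/
def vK2 : ℝ × ℝ := (-(Real.sqrt 2 / 2) * Real.sqrt 3, -(Real.sqrt 2 / 2))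

/-- The wedge function `ω(w) = max{w·v₁, w·v₂}`; `N_a = {ω ≤ a}`. -/
def wedgeFn (w : ℝ × ℝ) : ℝ := max (dot2 w vK1) (dot2 w vK2)

open scoped ENNReal NNReal Real

section IidFamilies

variable {ι κ α : Type*} [Fintype ι] [Fintype κ] [MeasurableSpace α] {ν : Measure α}

lemma map_eq_pi_of_iIndepFun {P : Measure Ω} [IsProbabilityMeasure P] {X : ι → Ω → α}
    (hX : ∀ i, Measurable (X i)) (hind : iIndepFun X P) (hlaw : ∀ i, P.map (X i) = ν) :
    P.map (fun ω i => X i ω) = Measure.pi fun _ => ν := by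
  rw [(iIndepFun_iff_map_fun_eq_pi_map fun i => (hX i).aemeasurable).1 hind]
  simp_rw [hlaw]

lemma measurePreserving_pi_comp_injective [IsProbabilityMeasure ν] {f : κ → ι}
    (hf : f.Injective) {φ : κ → α → α} (hφ : ∀ k, MeasurePreserving (φ k) ν ν) :
    MeasurePreserving (fun (x : ι → α) k => φ k (x (f k)))
      (Measure.pi fun _ => ν) (Measure.pi fun _ => ν) := by
  have hcoord : ∀ k, MeasurePreserving (fun x : ι → α => φ k (x (f k)))
      (Measure.pi fun _ => ν) ν := fun k => (hφ k).comp (measurePreserving_eval _ (f k))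
  refine ⟨measurable_pi_lambda _ fun k => (hcoord k).measurable,
    map_eq_pi_of_iIndepFun (fun k => (hcoord k).measurable) ?_ fun k => (hcoord k).map_eq⟩
  exact ((iIndepFun_pi (X := fun _ => id) fun _ => aemeasurable_id).precomp hf).comp _
    fun k => (hφ k).measurable

end IidFamilies

lemma ENNReal.le_ofReal_one_div_sqrt_of_mul_sq_le_one {y : ℝ≥0∞} {m : ℝ} (hm : 0 < m)
    (h : ENNReal.ofReal m * y ^ 2 ≤ 1) : y ≤ ENNReal.ofReal (1 / √m) := by
  have hy : y ≠ ⊤ := by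
    rintro rfl
    simp [ENNReal.top_pow, ENNReal.mul_top (ENNReal.ofReal_pos.2 hm).ne'] at h
  rw [← ENNReal.ofReal_toReal hy, ← ENNReal.ofReal_pow ENNReal.toReal_nonneg,
    ← ENNReal.ofReal_mul hm.le, ENNReal.ofReal_le_one] at h
  refine ENNReal.le_ofReal_iff_toReal_le hy (by positivity) |>.2 ?_
  rw [le_div_iff₀ (Real.sqrt_pos.2 hm), ← Real.sqrt_sq ENNReal.toReal_nonneg,
    ← Real.sqrt_mul' _ hm.le]
  exact Real.sqrt_le_one.2 (by linarith)

section PartialSums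

variable {n : ℕ}

/-- `x 0 + ⋯ + x (q - 1)`, where coordinates beyond `n - 1` count as `0`. -/
def partialSum (x : Fin n → ℝ) (q : ℕ) : ℝ :=
  ∑ i ∈ Finset.range q, if h : i < n then x ⟨i, h⟩ else 0

@[simp] lemma partialSum_zero (x : Fin n → ℝ) : partialSum x 0 = 0 := by
  simp [partialSum]

@[fun_prop] lemma measurable_partialSum (q : ℕ) :
    Measurable fun x : Fin n → ℝ => partialSum x q := by
  unfold partialSum
  refine Finset.measurable_sum _ fun i _ => ?_
  split_ifs <;> fun_prop

lemma partialSum_add_one (x : Fin n → ℝ) (q : ℕ) :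
    partialSum x (q + 1) = partialSum x q + if h : q < n then x ⟨q, h⟩ else 0 :=
  Finset.sum_range_succ _ _

lemma partialSum_castLE {m : ℕ} (hmn : m ≤ n) (x : Fin n → ℝ) {q : ℕ} (hq : q ≤ m) :
    partialSum (fun i => x (Fin.castLE hmn i)) q = partialSum x q := by
  refine Finset.sum_congr rfl fun i hi => ?_
  have : i < m := (Finset.mem_range.1 hi).trans_le hq
  simp [this, this.trans_le hmn]

lemma partialSum_shift {j : ℕ} (x : Fin n → ℝ) (q : ℕ) :
    partialSum (fun i : Fin (n - j) => x ⟨j + i, by omega⟩) q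
      = partialSum x (j + q) - partialSum x j := by
  rw [partialSum, partialSum, partialSum, Finset.sum_range_add_sub_sum_range]
  refine Finset.sum_congr rfl fun i _ => ?_
  by_cases h : i < n - j
  · simp [h, show j + i < n by omega]
  · simp [h, show ¬ j + i < n by omega]

lemma partialSum_reverse {j : ℕ} (hjn : j ≤ n) (x : Fin n → ℝ) {q : ℕ} (hq : q ≤ j) :
    partialSum (fun i : Fin j => -x ⟨j - 1 - i, by omega⟩) q
      = partialSum x (j - q) - partialSum x j := by
  induction q with
  | zero => simp
  | succ q ih =>
    rw [partialSum_add_one, ih (by omega)]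
    have hsplit : partialSum x (j - q) = partialSum x (j - (q + 1)) + x ⟨j - 1 - q, by omega⟩ := by
      rw [show j - q = j - (q + 1) + 1 by omega, partialSum_add_one]
      simp [show j - (q + 1) = j - 1 - q by omega, show j - 1 - q < n by omega]
    simp only [show q < j by omega, dite_true, hsplit]
    ring

lemma partialSum_succ (x : Fin (n + 1) → ℝ) (q : ℕ) :
    partialSum x (q + 1) = x 0 + partialSum (Fin.tail x) q := by
  rw [partialSum, Finset.sum_range_succ', add_comm]
  congr 1
  refine Finset.sum_congr rfl fun i _ => ?_
  by_cases h : i < n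
  · simp [h, Fin.tail]
  · simp [h]

lemma partialSum_sub_grid (f : ℝ → ℝ) (hf : f 0 = 0) (δ : ℝ) {n q : ℕ} (hq : q ≤ n) :
    partialSum (fun i : Fin n => f (i * δ) - f ((i + 1) * δ)) q = -f (q * δ) := by
  calc partialSum (fun i : Fin n => f (i * δ) - f ((i + 1) * δ)) q
      = ∑ k ∈ Finset.range q, (f (k * δ) - f ((k + 1 : ℕ) * δ)) :=
        Finset.sum_congr rfl fun k hk => by
          simp [(Finset.mem_range.1 hk).trans_le hq]
    _ = -f (q * δ) := by
        rw [Finset.sum_range_sub' (fun k : ℕ => f (k * δ)) q]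
        simp [hf]

end PartialSums

section Fluctuations

variable {n : ℕ}

def stayBelow (n : ℕ) (c : ℝ) : Set (Fin n → ℝ) :=
  {x | ∀ q ∈ Set.Ioc 0 n, partialSum x q < c}

def strictMaxAt (n j : ℕ) : Set (Fin n → ℝ) :=
  {x | ∀ i ≤ n, i ≠ j → partialSum x i < partialSum x j}

lemma measurableSet_stayBelow (n : ℕ) (c : ℝ) : MeasurableSet (stayBelow n c) := by
  simp only [stayBelow, Set.ofPred_forall]
  exact .iInter fun q => .iInter fun _ => measurableSet_lt (by fun_prop) measurable_const

lemma measurableSet_strictMaxAt (n j : ℕ) : MeasurableSet (strictMaxAt n j) := by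
  simp only [strictMaxAt, Set.ofPred_forall]
  exact .iInter fun _ => .iInter fun _ => .iInter fun _ =>
    measurableSet_lt (by fun_prop) (by fun_prop)

lemma stayBelow_subset_preimage_castLE {m : ℕ} (hmn : m ≤ n) (c : ℝ) :
    stayBelow n c ⊆ (fun x i => x (Fin.castLE hmn i)) ⁻¹' stayBelow m c := by
  intro x hx q hq
  rw [partialSum_castLE hmn x hq.2]
  exact hx q ⟨hq.1, hq.2.trans hmn⟩

lemma strictMaxAt_eq_preimage {j : ℕ} (hjn : j ≤ n) :
    strictMaxAt n j = (fun x : Fin n → ℝ =>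
        ((fun i : Fin j => -x ⟨j - 1 - i, by omega⟩), fun i : Fin (n - j) => x ⟨j + i, by omega⟩))
      ⁻¹' (stayBelow j 0 ×ˢ stayBelow (n - j) 0) := by
  ext x
  simp only [strictMaxAt, stayBelow, Set.mem_preimage, Set.mem_prod, Set.mem_ofPred_eq,
    Set.mem_Ioc, partialSum_shift, sub_neg]
  constructor
  · intro h
    refine ⟨fun q hq => ?_, fun q hq => h _ (by omega) (by omega)⟩
    rw [partialSum_reverse hjn x hq.2, sub_neg]
    exact h _ (by omega) (by omega)
  · rintro ⟨hbefore, hafter⟩ i hin hij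
    rcases lt_or_gt_of_ne hij with hij | hij
    · have := hbefore (j - i) (by omega)
      rwa [partialSum_reverse hjn x (by omega), sub_neg, Nat.sub_sub_self hij.le] at this
    · simpa [Nat.add_sub_cancel' hij.le] using hafter (i - j) (by omega)

lemma pairwiseDisjoint_strictMaxAt (n : ℕ) :
    (Finset.range (n + 1) : Set ℕ).PairwiseDisjoint (strictMaxAt n) := by
  intro j hj j' hj' hne
  simp only [Finset.coe_range, Set.mem_Iio] at hj hj'
  refine Set.disjoint_left.2 fun x hx hx' => ?_
  exact (hx j' (by omega) hne.symm).not_gt (hx' j (by omega) hne)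

variable (ν : Measure ℝ) [IsProbabilityMeasure ν]

lemma measure_stayBelow_le_of_le {m : ℕ} (hmn : m ≤ n) (c : ℝ) :
    Measure.pi (fun _ : Fin n => ν) (stayBelow n c)
      ≤ Measure.pi (fun _ : Fin m => ν) (stayBelow m c) := by
  have hmp := measurePreserving_pi_comp_injective (ν := ν) (Fin.castLE_injective hmn)
    (φ := fun _ => id) fun _ => .id ν
  calc _ ≤ _ := measure_mono (stayBelow_subset_preimage_castLE hmn c)
    _ = _ := hmp.measure_preimage (measurableSet_stayBelow m c).nullMeasurableSet

lemma measure_strictMaxAt [ν.IsNegInvariant] {j : ℕ} (hjn : j ≤ n) :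
    Measure.pi (fun _ : Fin n => ν) (strictMaxAt n j)
      = Measure.pi (fun _ : Fin j => ν) (stayBelow j 0)
        * Measure.pi (fun _ : Fin (n - j) => ν) (stayBelow (n - j) 0) := by
  let f : Fin j ⊕ Fin (n - j) → Fin n :=
    Sum.elim (fun i => ⟨j - 1 - i, by omega⟩) fun i => ⟨j + i, by omega⟩
  have hf : f.Injective := by
    rintro (i | i) (i' | i') h <;> simp only [f, Sum.elim_inl, Sum.elim_inr, Fin.mk.injEq] at h
    all_goals first | (congr 1; ext; omega) | omega
  have hmp := (measurePreserving_sumPiEquivProdPi fun _ => ν).comp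
    (measurePreserving_pi_comp_injective hf (φ := Sum.elim (fun _ => Neg.neg) fun _ => id)
      (by rintro (i | i) <;> simp [Measure.measurePreserving_neg, MeasurePreserving.id]))
  rw [strictMaxAt_eq_preimage hjn, ← Measure.prod_prod]
  exact hmp.measure_preimage
    ((measurableSet_stayBelow _ _).prod (measurableSet_stayBelow _ _)).nullMeasurableSet

theorem succ_mul_measure_stayBelow_zero_sq_le_one [ν.IsNegInvariant] (n : ℕ) :
    (n + 1 : ℝ≥0∞) * Measure.pi (fun _ : Fin n => ν) (stayBelow n 0) ^ 2 ≤ 1 := by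
  set b := Measure.pi (fun _ : Fin n => ν) (stayBelow n 0)
  have hterm : ∀ j ∈ Finset.range (n + 1),
      b ^ 2 ≤ Measure.pi (fun _ : Fin n => ν) (strictMaxAt n j) := by
    intro j hj
    have hjn : j ≤ n := Nat.lt_succ_iff.1 (Finset.mem_range.1 hj)
    rw [measure_strictMaxAt ν hjn, sq]
    exact mul_le_mul' (measure_stayBelow_le_of_le ν hjn 0)
      (measure_stayBelow_le_of_le ν (Nat.sub_le n j) 0)
  calc (n + 1 : ℝ≥0∞) * b ^ 2 = ∑ _j ∈ Finset.range (n + 1), b ^ 2 := by simp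
    _ ≤ ∑ j ∈ Finset.range (n + 1), Measure.pi (fun _ : Fin n => ν) (strictMaxAt n j) :=
      Finset.sum_le_sum hterm
    _ = Measure.pi (fun _ : Fin n => ν) (⋃ j ∈ Finset.range (n + 1), strictMaxAt n j) :=
      (measure_biUnion_finset (pairwiseDisjoint_strictMaxAt n)
        fun j _ => measurableSet_strictMaxAt n j).symm
    _ ≤ 1 := prob_le_one

lemma measure_Iic_neg_mul_measure_stayBelow_le_succ {c : ℝ} (hc : 0 < c) (n : ℕ) :
    ν (Set.Iic (-c)) * Measure.pi (fun _ : Fin n => ν) (stayBelow n c)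
      ≤ Measure.pi (fun _ : Fin (n + 1) => ν) (stayBelow (n + 1) 0) := by
  have hmp := measurePreserving_piFinSuccAbove (fun _ : Fin (n + 1) => ν) 0
  have hsub : MeasurableEquiv.piFinSuccAbove (fun _ => ℝ) 0 ⁻¹' (Set.Iic (-c) ×ˢ stayBelow n c)
      ⊆ stayBelow (n + 1) 0 := by
    rintro x ⟨hfirst : x 0 ≤ -c, hrest⟩ q ⟨hq, hqn⟩
    obtain ⟨q, rfl⟩ := Nat.exists_eq_add_of_lt hq
    rw [zero_add, partialSum_succ]
    rcases q.eq_zero_or_pos with rfl | hq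
    · simpa using hfirst.trans_lt (neg_lt_zero.2 hc)
    · have htail : partialSum (Fin.tail x) q < c := hrest q ⟨hq, by omega⟩
      linarith
  rw [← Measure.prod_prod, ← hmp.measure_preimage
    (measurableSet_Iic.prod (measurableSet_stayBelow n c)).nullMeasurableSet]
  exact measure_mono hsub

theorem measure_Iic_neg_mul_measure_stayBelow_le_one_div_sqrt [ν.IsNegInvariant] {c : ℝ}
    (hc : 0 < c) (n : ℕ) : ν (Set.Iic (-c)) * Measure.pi (fun _ : Fin n => ν) (stayBelow n c)
      ≤ ENNReal.ofReal (1 / √(n + 2)) := by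
  refine ENNReal.le_ofReal_one_div_sqrt_of_mul_sq_le_one (by positivity) ?_
  calc ENNReal.ofReal (n + 2) * (ν (Set.Iic (-c)) * Measure.pi (fun _ => ν) (stayBelow n c)) ^ 2
      ≤ ((n + 1 : ℕ) + 1 : ℝ≥0∞) * Measure.pi (fun _ => ν) (stayBelow (n + 1) 0) ^ 2 := by
        rw [show (n : ℝ) + 2 = ((n + 1 : ℕ) + 1 : ℝ) by push_cast; ring,
          ENNReal.ofReal_add (by positivity) zero_le_one, ENNReal.ofReal_natCast,
          ENNReal.ofReal_one]
        gcongr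
        exact measure_Iic_neg_mul_measure_stayBelow_le_succ ν hc n
    _ ≤ 1 := succ_mul_measure_stayBelow_zero_sq_le_one ν (n + 1)

end Fluctuations

section Gaussian

instance (v : ℝ≥0) : (gaussianReal 0 v).IsNegInvariant :=
  ⟨by rw [Measure.neg_def, gaussianReal_map_neg, neg_zero]⟩

lemma inv_two_le_measure_Iic_zero (ν : Measure ℝ) [IsProbabilityMeasure ν] [ν.IsNegInvariant] :
    2⁻¹ ≤ ν (Set.Iic 0) := by
  have hpos : ν (Set.Ioi 0) ≤ ν (Set.Iic 0) := by
    rw [← Measure.measure_neg, Set.neg_Ioi, neg_zero]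
    exact measure_mono Set.Iio_subset_Iic_self
  have hsum : ν (Set.Iic 0) + ν (Set.Ioi 0) = 1 := by
    rw [← Set.compl_Iic, measure_add_measure_compl measurableSet_Iic, measure_univ]
  rw [ENNReal.inv_le_iff_le_mul (by simp) (by simp), two_mul, ← hsum]
  gcongr

lemma gaussianReal_le_ofReal_mul_volume {v : ℝ≥0} (hv : v ≠ 0) (μ : ℝ) (s : Set ℝ) :
    gaussianReal μ v s ≤ ENNReal.ofReal (1 / √(2 * π * v)) * volume s := by
  rw [gaussianReal_apply μ hv, ← setLIntegral_const]
  refine lintegral_mono fun x => ENNReal.ofReal_le_ofReal ?_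
  rw [gaussianPDFReal_def, one_div]
  refine mul_le_of_le_one_right (by positivity) (Real.exp_le_one_iff.2 ?_)
  exact div_nonpos_of_nonpos_of_nonneg (neg_nonpos.2 (sq_nonneg _)) (by positivity)

lemma ofReal_le_gaussianReal_Iic_neg {c : ℝ} (hc : 0 < c) :
    ENNReal.ofReal (1 / 10) ≤ gaussianReal 0 (c ^ 2).toNNReal (Set.Iic (-c)) := by
  set ν := gaussianReal 0 (c ^ 2).toNNReal
  have hv : (c ^ 2).toNNReal ≠ 0 := by simp [hc.ne']
  have hstrip : ν (Set.Ioc (-c) 0) ≤ ENNReal.ofReal (2 / 5) := by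
    refine (gaussianReal_le_ofReal_mul_volume hv 0 _).trans ?_
    rw [Real.volume_Ioc, ← ENNReal.ofReal_mul (by positivity)]
    refine ENNReal.ofReal_le_ofReal ?_
    have hsqrt : √(2 * π * c ^ 2) = c * √(2 * π) := by
      rw [mul_comm, Real.sqrt_mul (sq_nonneg c), Real.sqrt_sq hc.le]
    have h2π : 5 / 2 ≤ √(2 * π) :=
      Real.le_sqrt_of_sq_le (by nlinarith [Real.pi_gt_d2])
    rw [Real.coe_toNNReal _ (sq_nonneg c), hsqrt, zero_sub, neg_neg, one_div_mul_eq_div,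
      div_le_div_iff₀ (by positivity) (by norm_num)]
    nlinarith
  have hhalf : ENNReal.ofReal (1 / 10) + ENNReal.ofReal (2 / 5)
      ≤ ν (Set.Iic (-c)) + ENNReal.ofReal (2 / 5) := by
    calc ENNReal.ofReal (1 / 10) + ENNReal.ofReal (2 / 5) = 2⁻¹ := by
          rw [← ENNReal.ofReal_add (by norm_num) (by norm_num), show (1 / 10 + 2 / 5 : ℝ) = 2⁻¹ by
            norm_num, ENNReal.ofReal_inv_of_pos two_pos, ENNReal.ofReal_ofNat]
      _ ≤ ν (Set.Iic 0) := inv_two_le_measure_Iic_zero ν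
      _ ≤ ν (Set.Iic (-c)) + ν (Set.Ioc (-c) 0) := by
          rw [← Set.Iic_union_Ioc_eq_Iic (neg_nonpos.2 hc.le)]
          exact measure_union_le _ _
      _ ≤ ν (Set.Iic (-c)) + ENNReal.ofReal (2 / 5) := by gcongr
  exact (ENNReal.add_le_add_iff_right ENNReal.ofReal_ne_top).1 hhalf

end Gaussian

lemma exists_nat_mul_lt_le_succ_mul {r δ : ℝ} (hr : 0 < r) (hδ : 0 < δ) :
    ∃ n : ℕ, n * δ < r ∧ r ≤ (n + 1) * δ := by
  have hk : 0 < ⌈r / δ⌉₊ := Nat.ceil_pos.2 (by positivity)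
  refine ⟨⌈r / δ⌉₊ - 1, ?_, ?_⟩
  · rw [Nat.cast_pred hk, ← lt_div_iff₀ hδ]
    linarith [Nat.ceil_lt_add_one (div_pos hr hδ).le]
  · rw [Nat.cast_pred hk, sub_add_cancel, ← div_le_iff₀ hδ]
    exact Nat.le_ceil _

section BrownianMotion

variable {P : Measure Ω} [IsProbabilityMeasure P] {W : ℝ → Ω → ℝ}

lemma IsStandardBM.map_neg_increments (hW : IsStandardBM P W) {δ : ℝ} (hδ : 0 ≤ δ) (n : ℕ) :
    P.map (fun ω (i : Fin n) => W (i * δ) ω - W ((i + 1) * δ) ω)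
      = Measure.pi fun _ => gaussianReal 0 δ.toNNReal := by
  have hmono : Monotone fun k : ℕ => k * δ := fun i j hij =>
    mul_le_mul_of_nonneg_right (Nat.cast_le.2 hij) hδ
  have hmeas : ∀ s t, Measurable fun ω => W t ω - W s ω :=
    fun s t => (hW.meas t).sub (hW.meas s)
  have hind := (hW.indep n (fun k : ℕ => k * δ) hmono (by simp)).comp (fun _ => Neg.neg)
    fun _ => measurable_neg
  simp only [Function.comp_def, neg_sub, Nat.cast_add, Nat.cast_one] at hind
  refine map_eq_pi_of_iIndepFun (fun i => hmeas _ _) hind fun i => ?_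
  have hgauss := hW.gauss (i * δ) ((i + 1) * δ) (by positivity) (by gcongr; linarith)
  rw [show ((i : ℝ) + 1) * δ - i * δ = δ by ring] at hgauss
  rw [← Measure.map_neg_eq_self (gaussianReal 0 δ.toNNReal), ← hgauss,
    Measure.map_map measurable_neg (hmeas _ _)]
  simp only [Function.comp_def, neg_sub]

theorem IsStandardBM.measure_forall_neg_lt_le (hW : IsStandardBM P W) {c r : ℝ} (hc : 0 < c)
    (hr : 0 < r) : P {ω | ∀ t ∈ Set.Ioo 0 r, -c < W t ω} ≤ ENNReal.ofReal (10 * c / √r) := by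
  obtain ⟨n, hnr, hrn⟩ := exists_nat_mul_lt_le_succ_mul hr (pow_pos hc 2)
  set X : Ω → Fin n → ℝ := fun ω i => W (i * c ^ 2) ω - W ((i + 1) * c ^ 2) ω
  set ν := gaussianReal 0 (c ^ 2).toNNReal
  have hX : P.map X = Measure.pi fun _ => ν := hW.map_neg_increments (sq_nonneg c) n
  have hsub : {ω | ∀ t ∈ Set.Ioo 0 r, -c < W t ω} ⊆ X ⁻¹' stayBelow n c := by
    intro ω hω q ⟨hq, hqn⟩
    rw [show partialSum (X ω) q = -W (q * c ^ 2) ω from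
        partialSum_sub_grid (W · ω) (hW.start ω) _ hqn,
      neg_lt]
    refine hω _ ⟨by positivity, lt_of_le_of_lt ?_ hnr⟩
    gcongr
  have hν : 1 ≤ ENNReal.ofReal 10 * ν (Set.Iic (-c)) := by
    calc (1 : ℝ≥0∞) = ENNReal.ofReal 10 * ENNReal.ofReal (1 / 10) := by
          rw [← ENNReal.ofReal_mul (by norm_num)]; norm_num
      _ ≤ _ := by gcongr; exact ofReal_le_gaussianReal_Iic_neg hc
  calc P {ω | ∀ t ∈ Set.Ioo 0 r, -c < W t ω}
      ≤ P (X ⁻¹' stayBelow n c) := measure_mono hsub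
    _ = Measure.pi (fun _ => ν) (stayBelow n c) := by
      have hXm : Measurable X := measurable_pi_lambda _ fun i => (hW.meas _).sub (hW.meas _)
      rw [← hX, Measure.map_apply hXm (measurableSet_stayBelow n c)]
    _ ≤ ENNReal.ofReal 10 * (ν (Set.Iic (-c)) * Measure.pi (fun _ => ν) (stayBelow n c)) := by
      rw [← mul_assoc]; exact le_mul_of_one_le_left' hν
    _ ≤ ENNReal.ofReal 10 * ENNReal.ofReal (1 / √(n + 2)) := by
      gcongr; exact measure_Iic_neg_mul_measure_stayBelow_le_one_div_sqrt ν hc n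
    _ ≤ ENNReal.ofReal (10 * c / √r) := by
      rw [← ENNReal.ofReal_mul (by norm_num)]
      refine ENNReal.ofReal_le_ofReal ?_
      have hsqrt : √r ≤ c * √(n + 2) := by
        rw [← Real.sqrt_sq hc.le, ← Real.sqrt_mul (sq_nonneg c)]
        exact Real.sqrt_le_sqrt (by nlinarith)
      rw [mul_one_div, div_le_div_iff₀ (by positivity) (Real.sqrt_pos.2 hr)]
      nlinarith

end BrownianMotion

lemma forall_lt_of_forall_ne {F : ℝ → ℝ} (hF : Continuous F) {a r : ℝ} (h0 : F 0 < a)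
    (hne : ∀ t ∈ Set.Ioo 0 r, F t ≠ a) : ∀ t ∈ Set.Ioo 0 r, F t < a := by
  intro t ht
  by_contra! hle
  obtain ⟨u, hu, hFu⟩ := intermediate_value_Ioo ht.1.le hF.continuousOn
    ⟨h0, (hle.lt_of_ne' (hne t ht))⟩
  exact hne u ⟨hu.1, hu.2.trans ht.2⟩ hFu

lemma neg_lt_fst_of_wedgeFn_lt {w : ℝ × ℝ} {a : ℝ} (h : wedgeFn w < a) :
    -(√6 / 3 * a) < w.1 := by
  have hsum : dot2 w vK1 + dot2 w vK2 = -(√6 * w.1) := by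
    have h6 : √2 * √3 = √6 := by rw [← Real.sqrt_mul zero_le_two]; norm_num
    simp only [dot2, vK1, vK2]
    linear_combination (-w.1) * h6
  have h1 := (le_max_left _ _).trans_lt h
  have h2 := (le_max_right _ _).trans_lt h
  have hscaled : √6 * (w.1 + √6 / 3 * a) = √6 * w.1 + 2 * a := by
    linear_combination (a / 3) * Real.mul_self_sqrt (show (0:ℝ) ≤ 6 by norm_num)
  have hpos : 0 < w.1 + √6 / 3 * a :=
    pos_of_mul_pos_right (hscaled ▸ by linarith) (Real.sqrt_nonneg 6)
  linarith

lemma neg_lt_of_forall_wedgeFn_ne {f g : ℝ → ℝ} (hf : Continuous f) (hg : Continuous g)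
    (hf0 : f 0 = 0) (hg0 : g 0 = 0) {a r : ℝ} (ha : 0 < a)
    (h : ∀ t ∈ Set.Ioo 0 r, wedgeFn (f t, g t) ≠ a) :
    ∀ t ∈ Set.Ioo 0 r, -(√6 / 3 * a) < f t := by
  have hF : Continuous fun t => wedgeFn (f t, g t) := by
    unfold wedgeFn dot2
    fun_prop
  have h0 : wedgeFn (f 0, g 0) < a := by simpa [wedgeFn, dot2, hf0, hg0] using ha
  exact fun t ht => neg_lt_fst_of_wedgeFn_lt (forall_lt_of_forall_ne hF h0 h t ht)

theorem planar_bm_wedge_exit_time_tail_general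
    (P : Measure Ω) [IsProbabilityMeasure P]
    (W1 W2 : ℝ → Ω → ℝ) (hW1 : IsStandardBM P W1) (hW2 : IsStandardBM P W2) :
    ∃ C : ℝ, 0 < C ∧ ∀ a : ℝ, 1 ≤ a → ∀ r : ℝ, 0 < r →
      P {ω | ∀ t ∈ Set.Ioo (0:ℝ) r, wedgeFn (W1 t ω, W2 t ω) ≠ a}
        ≤ ENNReal.ofReal (C * a ^ ((3:ℝ)/2) / Real.sqrt r) := by
  refine ⟨10, by norm_num, fun a ha r hr => ?_⟩
  have hsix : √6 / 3 ≤ 1 := by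
    rw [div_le_one three_pos, Real.sqrt_le_left (by norm_num)]
    norm_num
  have hca : √6 / 3 * a ≤ a ^ ((3 : ℝ) / 2) :=
    (mul_le_of_le_one_left (by linarith) hsix).trans (Real.self_le_rpow_of_one_le ha (by norm_num))
  calc P {ω | ∀ t ∈ Set.Ioo 0 r, wedgeFn (W1 t ω, W2 t ω) ≠ a}
      ≤ P {ω | ∀ t ∈ Set.Ioo 0 r, -(√6 / 3 * a) < W1 t ω} :=
        measure_mono fun ω hω => neg_lt_of_forall_wedgeFn_ne (hW1.cont ω) (hW2.cont ω)
          (hW1.start ω) (hW2.start ω) (by linarith) hω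
    _ ≤ ENNReal.ofReal (10 * (√6 / 3 * a) / √r) :=
        hW1.measure_forall_neg_lt_le (by positivity) hr
    _ ≤ ENNReal.ofReal (10 * a ^ ((3 : ℝ) / 2) / √r) := by gcongr

/-- Let `Y = (W₁, W₂)` be a standard planar Brownian motion
started at the origin and, for `a ≥ 1`, let `κ_a` be the first time `t > 0`
with `ω(Y(t)) = a`.  There is an absolute constant `C > 0` such that for all
`a ≥ 1` and `r > 0`, `P(κ_a ≥ r) ≤ C a^{3/2}/√r`.  (The event `{κ_a ≥ r}` is
expressed as: `ω(Y(t)) ≠ a` for all `t ∈ (0, r)`.) -/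
theorem planar_bm_wedge_exit_time_tail
    (P : Measure Ω) [IsProbabilityMeasure P]
    (W1 W2 : ℝ → Ω → ℝ) (hW1 : IsStandardBM P W1) (hW2 : IsStandardBM P W2)
    (hind : IndepFun (fun ω => fun t => W1 t ω) (fun ω => fun t => W2 t ω) P) :
    ∃ C : ℝ, 0 < C ∧ ∀ a : ℝ, 1 ≤ a → ∀ r : ℝ, 0 < r →
      P {ω | ∀ t ∈ Set.Ioo (0:ℝ) r, wedgeFn (W1 t ω, W2 t ω) ≠ a}
        ≤ ENNReal.ofReal (C * a ^ ((3:ℝ)/2) / Real.sqrt r) :=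
  planar_bm_wedge_exit_time_tail_general P W1 W2 hW1 hW2

end
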